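/- arXiv:1710.02870 — 14 statements merged into one kernel-verified Lean document; each statement's English description precedes it below -/
import Mathlib

section
/- If (A,⋄,∘,σ) is a skew left truss, then for all a ∈ A, σ(a) = a ∘ 1⋄, where 1⋄ is the neutral element of the group (A,⋄). -/
/-- In a skew left truss `(A, *, circ, σ)` (group `*`, associative `circ`,
truss distributive law), the cocycle satisfies `σ a = circ a 1`. -/
theorem skew_truss_cocycle_eq {A : Type*} [Group A] (circ : A → A → A) (σ : A → A)
    (hassoc : ∀ a b c : A, circ (circ a b) c = circ a (circ b c))
    (hlaw : ∀ a b c : A, circ a (b * c) = circ a b * (σ a)⁻¹ * circ a c) :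
    ∀ a : A, σ a = circ a 1 := by
  intro a
  have h := hlaw a 1 1
  rw [one_mul, mul_assoc] at h
  have h2 : (1 : A) = (σ a)⁻¹ * circ a 1 :=
    mul_left_cancel (a := circ a 1) (by rw [mul_one]; exact h)
  rw [eq_comm, inv_mul_eq_iff_eq_mul, mul_one] at h2
  exact h2.symm
end

section
/- In a skew left truss (A,⋄,∘,σ), the cocycle σ is equivariant: for all a,b ∈ A, σ(a∘b) = a ∘ σ(b). -/
/-- In a skew left truss, the cocycle is equivariant: `σ (a ∘ b) = a ∘ σ b`. -/
theorem skew_truss_cocycle_equivariant {A : Type*} [Group A] (circ : A → A → A) (σ : A → A)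
    (hassoc : ∀ a b c : A, circ (circ a b) c = circ a (circ b c))
    (hlaw : ∀ a b c : A, circ a (b * c) = circ a b * (σ a)⁻¹ * circ a c) :
    ∀ a b : A, σ (circ a b) = circ a (σ b) := by
  have hσ : ∀ a : A, σ a = circ a 1 := by
    intro a
    have h := hlaw a 1 1
    rw [one_mul] at h
    have h2 : circ a 1 * (σ a)⁻¹ * circ a 1 = 1 * circ a 1 := by rw [one_mul]; exact h.symm
    have h3 : circ a 1 * (σ a)⁻¹ = 1 := mul_right_cancel h2
    exact (mul_inv_eq_one.mp h3).symm
  intro a b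
  rw [hσ, hσ, hassoc]
end

section
/- Let A carry a group operation ⋄ and an associative operation ∘. If there exists λ : A → (A → A) such that a∘(b⋄c) = (a∘b) ⋄ λ_a(c) for all a,b,c ∈ A, then (A,⋄,∘) is a skew left truss with cocycle σ(a) = a∘1⋄, i.e., a∘(b⋄c) = (a∘b) ⋄ σ(a)⁻¹ ⋄ (a∘c) for all a,b,c. -/
/-- If `a∘(b⋄c) = (a∘b) ⋄ λ_a(c)` for some `λ`, then `(A,⋄,∘)` is a skew left truss
with cocycle `σ a = a ∘ 1`. -/
theorem lambda_gives_skew_truss {A : Type*} [Group A] (circ : A → A → A)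
    (hassoc : ∀ a b c : A, circ (circ a b) c = circ a (circ b c))
    (lam : A → A → A)
    (hlam : ∀ a b c : A, circ a (b * c) = circ a b * lam a c) :
    ∀ a b c : A, circ a (b * c) = circ a b * (circ a 1)⁻¹ * circ a c := by
  intro a b c
  have h1 : circ a c = circ a 1 * lam a c := by
    have := hlam a 1 c; rwa [one_mul] at this
  have hlc : lam a c = (circ a 1)⁻¹ * circ a c := by
    rw [h1]; group
  rw [hlam a b c, hlc, mul_assoc]
end

section
/- Let A carry a group operation ⋄ and an associative operation ∘. If there exists μ : A → (A → A) such that a∘(b⋄c) = μ_a(b) ⋄ (a∘c) for all a,b,c ∈ A, then (A,⋄,∘) is a skew left truss with cocycle σ(a) = a∘1⋄. -/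
/-- If `a∘(b⋄c) = μ_a(b) ⋄ (a∘c)` for some `μ`, then `(A,⋄,∘)` is a skew left truss
with cocycle `σ a = a ∘ 1`. -/
theorem mu_gives_skew_truss {A : Type*} [Group A] (circ : A → A → A)
    (hassoc : ∀ a b c : A, circ (circ a b) c = circ a (circ b c))
    (mu : A → A → A)
    (hmu : ∀ a b c : A, circ a (b * c) = mu a b * circ a c) :
    ∀ a b c : A, circ a (b * c) = circ a b * (circ a 1)⁻¹ * circ a c := by
  intro a b c
  have h1 : mu a b = circ a b * (circ a 1)⁻¹ := by
    have := hmu a b 1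
    rw [mul_one] at this
    rw [this]; group
  rw [hmu a b c, h1]
end

section
/- Let A carry a group operation ⋄ and an associative operation ∘. Then (A,⋄,∘) admits a map σ making it a skew left truss if and only if ∘ left-distributes over the heap operation [a,b,c] := a ⋄ b⁻¹ ⋄ c, i.e., a∘[b,c,d] = [a∘b, a∘c, a∘d] for all a,b,c,d ∈ A. -/
/-- `(A,⋄,∘)` admits a cocycle `σ` making it a skew left truss iff `∘` left-distributes
over the heap operation `[b,c,d] = b ⋄ c⁻¹ ⋄ d`. -/
theorem skew_truss_iff_heap_distrib {A : Type*} [Group A] (circ : A → A → A)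
    (hassoc : ∀ a b c : A, circ (circ a b) c = circ a (circ b c)) :
    (∃ σ : A → A, ∀ a b c : A, circ a (b * c) = circ a b * (σ a)⁻¹ * circ a c) ↔
    (∀ a b c d : A, circ a (b * c⁻¹ * d) = circ a b * (circ a c)⁻¹ * circ a d) := by
  constructor
  · rintro ⟨σ, h⟩ a b c d
    have h1 : circ a (b * c⁻¹) = circ a b * (circ a c)⁻¹ * σ a := by
      have := h a (b * c⁻¹) c
      rw [mul_assoc, inv_mul_cancel, mul_one] at this
      rw [this]; group
    have h2 := h a (b * c⁻¹) d
    rw [h2, h1]; group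
  · intro h
    exact ⟨fun a => circ a 1, fun a b c => by simpa using h a b 1 c⟩
end

section
/- In a skew left truss (A,⋄,∘,σ), the map λ : A → Map(A,A) defined by λ_a(b) = σ(a)⁻¹ ⋄ (a∘b) gives an action of the semigroup (A,∘) on (A,⋄) by group endomorphisms: for all a,b,c ∈ A, λ_a(b⋄c) = λ_a(b) ⋄ λ_a(c) and λ_a(λ_b(c)) = λ_{a∘b}(c). -/
/-- The map `λ_a(b) = σ(a)⁻¹ ⋄ (a∘b)` is an action of `(A,∘)` on `(A,⋄)` by group
endomorphisms. -/
theorem skew_truss_lambda_action {A : Type*} [Group A] (circ : A → A → A) (σ : A → A)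
    (hassoc : ∀ a b c : A, circ (circ a b) c = circ a (circ b c))
    (hlaw : ∀ a b c : A, circ a (b * c) = circ a b * (σ a)⁻¹ * circ a c) :
    (∀ a b c : A, (σ a)⁻¹ * circ a (b * c) = ((σ a)⁻¹ * circ a b) * ((σ a)⁻¹ * circ a c)) ∧
    (∀ a b c : A, (σ a)⁻¹ * circ a ((σ b)⁻¹ * circ b c)
        = (σ (circ a b))⁻¹ * circ (circ a b) c) := by
  have h1 : ∀ a b c : A, (σ a)⁻¹ * circ a (b * c)
      = ((σ a)⁻¹ * circ a b) * ((σ a)⁻¹ * circ a c) := by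
    intro a b c
    rw [hlaw]
    group
  have hσ : ∀ a : A, σ a = circ a 1 := by
    intro a
    have h := hlaw a 1 1
    rw [one_mul] at h
    -- h : circ a 1 = circ a 1 * (σ a)⁻¹ * circ a 1
    have h2 : (1 : A) * circ a 1 = (circ a 1 * (σ a)⁻¹) * circ a 1 := by
      rw [one_mul]; exact h
    have h3 := mul_right_cancel h2
    have h4 : circ a 1 * (σ a)⁻¹ = 1 := h3.symm
    exact (mul_inv_eq_one.mp h4).symm
  have hinv : ∀ a b : A, (σ a)⁻¹ * circ a ((σ b)⁻¹) * (σ a)⁻¹ = (circ a (σ b))⁻¹ := by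
    intro a b
    have h := hlaw a (σ b) ((σ b)⁻¹)
    rw [mul_inv_cancel, ← hσ a] at h
    -- h : σ a = circ a (σ b) * (σ a)⁻¹ * circ a ((σ b)⁻¹)
    have key : circ a (σ b) * ((σ a)⁻¹ * circ a ((σ b)⁻¹) * (σ a)⁻¹) = 1 := by
      calc circ a (σ b) * ((σ a)⁻¹ * circ a ((σ b)⁻¹) * (σ a)⁻¹)
          = (circ a (σ b) * (σ a)⁻¹ * circ a ((σ b)⁻¹)) * (σ a)⁻¹ := by group
        _ = σ a * (σ a)⁻¹ := by rw [← h]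
        _ = 1 := mul_inv_cancel _
    exact (inv_eq_of_mul_eq_one_right key).symm
  refine ⟨h1, ?_⟩
  intro a b c
  have hσab : σ (circ a b) = circ a (σ b) := by
    rw [hσ (circ a b), hassoc, ← hσ b]
  rw [h1, ← hassoc, hσab]
  calc ((σ a)⁻¹ * circ a ((σ b)⁻¹)) * ((σ a)⁻¹ * circ (circ a b) c)
      = ((σ a)⁻¹ * circ a ((σ b)⁻¹) * (σ a)⁻¹) * circ (circ a b) c := by group
    _ = (circ a (σ b))⁻¹ * circ (circ a b) c := by rw [hinv]
end

section
/- In a skew left truss (A,⋄,∘,σ), the map μ : A → Map(A,A) defined by μ_a(b) = (a∘b) ⋄ σ(a)⁻¹ gives an action of the semigroup (A,∘) on (A,⋄) by group endomorphisms: for all a,b,c ∈ A, μ_a(b⋄c) = μ_a(b) ⋄ μ_a(c) and μ_a(μ_b(c)) = μ_{a∘b}(c). -/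
/-!
The truss law at `b = c = 1` forces `σ a = a ∘ 1`. Then `μ_a` is multiplicative by a direct
expansion of the law, and associativity of `∘` gives `σ (a ∘ b) = a ∘ σ b`. The law applied to
`x⁻¹ * x = 1` computes `a ∘ x⁻¹`, which is all that is needed to expand `μ_a (μ_b c)`.
-/

namespace SkewTruss

variable {A : Type*} [Group A] (circ : A → A → A) (σ : A → A)

def mu (a b : A) : A := circ a b * (σ a)⁻¹

variable {circ σ}

section Law

variable (hlaw : ∀ a b c : A, circ a (b * c) = circ a b * (σ a)⁻¹ * circ a c)
include hlaw

theorem sigma_eq_circ_one (a : A) : σ a = circ a 1 := by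
  have h : circ a 1 * (σ a)⁻¹ * circ a 1 = 1 * circ a 1 := by rw [← hlaw, one_mul, one_mul]
  exact (mul_inv_eq_one.mp (mul_right_cancel h)).symm

theorem circ_inv (a x : A) : circ a x⁻¹ = σ a * (circ a x)⁻¹ * σ a := by
  have h := hlaw a x⁻¹ x
  rw [inv_mul_cancel, ← sigma_eq_circ_one hlaw] at h
  calc circ a x⁻¹ = circ a x⁻¹ * (σ a)⁻¹ * circ a x * (circ a x)⁻¹ * σ a := by group
    _ = σ a * (circ a x)⁻¹ * σ a := by rw [← h]

theorem mu_mul (a b c : A) : mu circ σ a (b * c) = mu circ σ a b * mu circ σ a c := by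
  simp only [mu, hlaw]
  group

theorem sigma_circ (hassoc : ∀ a b c : A, circ (circ a b) c = circ a (circ b c)) (a b : A) :
    σ (circ a b) = circ a (σ b) := by
  rw [sigma_eq_circ_one hlaw, hassoc, ← sigma_eq_circ_one hlaw]

theorem mu_mu (hassoc : ∀ a b c : A, circ (circ a b) c = circ a (circ b c)) (a b c : A) :
    mu circ σ a (mu circ σ b c) = mu circ σ (circ a b) c := by
  simp only [mu, hlaw, circ_inv hlaw, hassoc, sigma_circ hlaw hassoc]
  group

end Law

end SkewTruss

open SkewTruss in
/-- The map `μ_a(b) = (a∘b) ⋄ σ(a)⁻¹` is an action of `(A,∘)` on `(A,⋄)` by group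
endomorphisms. -/
theorem skew_truss_mu_action {A : Type*} [Group A] (circ : A → A → A) (σ : A → A)
    (hassoc : ∀ a b c : A, circ (circ a b) c = circ a (circ b c))
    (hlaw : ∀ a b c : A, circ a (b * c) = circ a b * (σ a)⁻¹ * circ a c) :
    (∀ a b c : A, circ a (b * c) * (σ a)⁻¹ = (circ a b * (σ a)⁻¹) * (circ a c * (σ a)⁻¹)) ∧
    (∀ a b c : A, circ a (circ b c * (σ b)⁻¹) * (σ a)⁻¹
        = circ (circ a b) c * (σ (circ a b))⁻¹) :=
  ⟨mu_mul hlaw, mu_mu hlaw hassoc⟩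
end

section
/- Let (A,⋄,∘,σ) be a skew left truss and fix e ∈ A. Define a new operation a ⋄_e b := a ⋄ e⁻¹ ⋄ b. Then (A,⋄_e) is a group with identity e, and (A,⋄_e,∘) is a skew left truss with cocycle σ_e(a) = a∘e, i.e., a∘(b⋄_e c) = (a∘b) ⋄_e σ_e(a)^{⋄_e} ⋄_e (a∘c) for all a,b,c, where x^{⋄_e} = e⋄x⁻¹⋄e denotes the inverse in (A,⋄_e). -/
/-- Given a skew left truss `(A,⋄,∘,σ)` and `e ∈ A`, the operation `a ⋄ₑ b = a ⋄ e⁻¹ ⋄ b`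
makes `A` a group with identity `e` and inverse `x ↦ e ⋄ x⁻¹ ⋄ e`, and
`(A,⋄ₑ,∘)` is a skew left truss with cocycle `σₑ a = a ∘ e`. -/
theorem skew_truss_shift {A : Type*} [Group A] (circ : A → A → A) (σ : A → A)
    (hassoc : ∀ a b c : A, circ (circ a b) c = circ a (circ b c))
    (hlaw : ∀ a b c : A, circ a (b * c) = circ a b * (σ a)⁻¹ * circ a c)
    (e : A) :
    (∀ a b c : A, (a * e⁻¹ * b) * e⁻¹ * c = a * e⁻¹ * (b * e⁻¹ * c)) ∧
    (∀ a : A, a * e⁻¹ * e = a ∧ e * e⁻¹ * a = a) ∧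
    (∀ a : A, a * e⁻¹ * (e * a⁻¹ * e) = e ∧ (e * a⁻¹ * e) * e⁻¹ * a = e) ∧
    (∀ a b c : A,
      circ a (b * e⁻¹ * c)
        = (circ a b * e⁻¹ * (e * (circ a e)⁻¹ * e)) * e⁻¹ * circ a c) := by
  refine ⟨by intros; group, by intro a; exact ⟨by group, by group⟩,
    by intro a; exact ⟨by group, by group⟩, ?_⟩
  intro a b c
  have h1 : circ a (e⁻¹ * c) = σ a * (circ a e)⁻¹ * circ a c := by
    have h := hlaw a e (e⁻¹ * c)
    rw [mul_inv_cancel_left] at h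
    rw [h]; group
  calc circ a (b * e⁻¹ * c) = circ a (b * (e⁻¹ * c)) := by rw [mul_assoc]
    _ = circ a b * (σ a)⁻¹ * (σ a * (circ a e)⁻¹ * circ a c) := by rw [hlaw, h1]
    _ = (circ a b * e⁻¹ * (e * (circ a e)⁻¹ * e)) * e⁻¹ * circ a c := by group
end

section
/- Let (A,⋄,∘,σ) be a skew left truss such that 1⋄ is central in the semigroup (A,∘), i.e., a∘1⋄ = 1⋄∘a for all a. Then for every positive integer n and all a,b ∈ A: σⁿ(a⋄b) = σⁿ(a) ⋄ (σⁿ(1⋄))⁻¹ ⋄ σⁿ(b). -/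
/-- If `1` is central in `(A,∘)`, then `σⁿ(a⋄b) = σⁿ(a) ⋄ σⁿ(1)⁻¹ ⋄ σⁿ(b)` for `n ≥ 1`. -/
theorem skew_truss_sigma_iterate_add {A : Type*} [Group A] (circ : A → A → A) (σ : A → A)
    (hassoc : ∀ a b c : A, circ (circ a b) c = circ a (circ b c))
    (hlaw : ∀ a b c : A, circ a (b * c) = circ a b * (σ a)⁻¹ * circ a c)
    (hcentral : ∀ a : A, circ a 1 = circ 1 a) :
    ∀ n : ℕ, 0 < n → ∀ a b : A,
      σ^[n] (a * b) = σ^[n] a * (σ^[n] 1)⁻¹ * σ^[n] b := by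
  have hσ : ∀ a : A, σ a = circ a 1 := by
    intro a
    have h := hlaw a 1 1
    rw [mul_one] at h
    have h2 : circ a 1 * 1 = circ a 1 * ((σ a)⁻¹ * circ a 1) := by
      rw [mul_one]; rw [← mul_assoc]; exact h
    exact inv_mul_eq_one.mp (mul_left_cancel h2).symm
  have hσ1 : ∀ a : A, σ a = circ 1 a := fun a => (hσ a).trans (hcentral a)
  have key : ∀ x y : A, σ (x * y) = σ x * (σ 1)⁻¹ * σ y := by
    intro x y
    rw [hσ1 (x * y), hlaw 1 x y, ← hσ1 x, ← hσ1 y]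
  have keyinv : ∀ u : A, σ u⁻¹ = σ 1 * (σ u)⁻¹ * σ 1 := by
    intro u
    have h := key u u⁻¹
    rw [mul_inv_cancel] at h
    have : σ 1 * (σ u)⁻¹ * σ 1 = σ 1 * (σ u)⁻¹ * (σ u * (σ 1)⁻¹ * σ u⁻¹) := by
      rw [← h]
    rw [this]; group
  intro n hn
  induction n with
  | zero => exact absurd hn (by norm_num)
  | succ n ih =>
    intro a b
    rcases Nat.eq_zero_or_pos n with h0 | hpos
    · subst h0; simpa using key a b
    · have ihn := ih hpos
      rw [Function.iterate_succ_apply', Function.iterate_succ_apply',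
          Function.iterate_succ_apply', Function.iterate_succ_apply',
          ihn a b, key _ (σ^[n] b), key (σ^[n] a) _, keyinv]
      group
end

section
/- Let (A,⋄,∘,σ) be a skew left truss such that 1⋄ is central in (A,∘). Then σ is an endomorphism of the heap (A,[-,-,-]) where [a,b,c] = a⋄b⁻¹⋄c: for all a,b,c ∈ A, σ([a,b,c]) = [σ(a),σ(b),σ(c)]. -/
/-- If `1` is central in `(A,∘)`, then `σ` is a heap endomorphism:
`σ(a ⋄ b⁻¹ ⋄ c) = σ(a) ⋄ σ(b)⁻¹ ⋄ σ(c)`. -/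
theorem skew_truss_sigma_heap_endo {A : Type*} [Group A] (circ : A → A → A) (σ : A → A)
    (hassoc : ∀ a b c : A, circ (circ a b) c = circ a (circ b c))
    (hlaw : ∀ a b c : A, circ a (b * c) = circ a b * (σ a)⁻¹ * circ a c)
    (hcentral : ∀ a : A, circ a 1 = circ 1 a) :
    ∀ a b c : A, σ (a * b⁻¹ * c) = σ a * (σ b)⁻¹ * σ c := by
  have hσ : ∀ a : A, σ a = circ a 1 := by
    intro a
    have h := hlaw a 1 1
    rw [one_mul] at h
    have h2 : (1 : A) * circ a 1 = circ a 1 * (σ a)⁻¹ * circ a 1 := by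
      rw [one_mul]; exact h
    have h3 := mul_right_cancel h2
    exact (mul_inv_eq_one.mp h3.symm).symm
  have hmul : ∀ x y : A, σ (x * y) = σ x * (σ 1)⁻¹ * σ y := by
    intro x y
    calc σ (x * y) = circ 1 (x * y) := by rw [hσ, hcentral]
      _ = circ 1 x * (σ 1)⁻¹ * circ 1 y := hlaw 1 x y
      _ = σ x * (σ 1)⁻¹ * σ y := by rw [← hcentral, ← hcentral, ← hσ, ← hσ]
  have hinv : ∀ b : A, σ b⁻¹ = σ 1 * (σ b)⁻¹ * σ 1 := by
    intro b
    have h := hmul b b⁻¹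
    rw [mul_inv_cancel] at h
    calc σ b⁻¹ = (σ b * (σ 1)⁻¹)⁻¹ * (σ b * (σ 1)⁻¹ * σ b⁻¹) := by group
      _ = (σ b * (σ 1)⁻¹)⁻¹ * σ 1 := by rw [← h]
      _ = σ 1 * (σ b)⁻¹ * σ 1 := by group
  intro a b c
  rw [hmul, hmul, hinv]
  group
end

section
/- Let f be a morphism from a skew left truss (A,⋄,∘,σ_A) to a skew left truss (B,⋄,∘,σ_B) (i.e., f is a group homomorphism for ⋄ and a semigroup homomorphism for ∘). Define the n-th chamber (pi f)ⁿ = {a ∈ A : f(a) = σ_Bⁿ(1⋄)}. Then for a ∈ (pi f)ᵐ and b ∈ (pi f)ⁿ, one has a∘b ∈ (pi f)^{m+n+1}. -/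
/-- Chambers of the pith: if `f a = σ_B^[m] 1` and `f b = σ_B^[n] 1`, then
`f (a ∘ b) = σ_B^[m+n+1] 1`. -/
theorem skew_truss_pith_chambers {A B : Type*} [Group A] [Group B]
    (circA : A → A → A) (σA : A → A)
    (hassocA : ∀ a b c : A, circA (circA a b) c = circA a (circA b c))
    (hlawA : ∀ a b c : A, circA a (b * c) = circA a b * (σA a)⁻¹ * circA a c)
    (circB : B → B → B) (σB : B → B)
    (hassocB : ∀ a b c : B, circB (circB a b) c = circB a (circB b c))
    (hlawB : ∀ a b c : B, circB a (b * c) = circB a b * (σB a)⁻¹ * circB a c)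
    (f : A → B)
    (hfgrp : ∀ a b : A, f (a * b) = f a * f b)
    (hfcirc : ∀ a b : A, f (circA a b) = circB (f a) (f b))
    (m n : ℕ) (a b : A)
    (ha : f a = σB^[m] 1) (hb : f b = σB^[n] 1) :
    f (circA a b) = σB^[m + n + 1] 1 := by
  have hσ : ∀ x : B, σB x = circB x 1 := by
    intro x
    have h := hlawB x 1 1
    rw [one_mul] at h
    group at h
    exact (mul_left_cancel (by rw [← h]; group) : σB x = circB x 1)
  have key : ∀ n m : ℕ, circB (σB^[m] 1) (σB^[n] 1) = σB^[m + n + 1] 1 := by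
    intro n
    induction n with
    | zero => intro m; simp [hσ, Function.iterate_succ_apply']
    | succ k ih =>
        intro m
        rw [Function.iterate_succ_apply' σB k, hσ (σB^[k] 1), ← hassocB, ← hσ, ih,
          ← Function.iterate_succ_apply' σB]
        congr 1
  rw [hfcirc, ha, hb, key]
end

section
/- Let (A,⋄,∘,σ) be a skew left truss. Then σ is bijective if and only if the semigroup (A,∘) has a right identity e with respect to which 1⋄ is invertible, i.e., there exist e,u ∈ A with a∘e = a for all a, and u∘1⋄ = 1⋄∘u = e. -/
/-- `σ` is bijective iff `(A,∘)` has a right identity `e` with respect to which `1⋄` is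
invertible. -/
theorem skew_truss_sigma_bijective_iff {A : Type*} [Group A] (circ : A → A → A) (σ : A → A)
    (hassoc : ∀ a b c : A, circ (circ a b) c = circ a (circ b c))
    (hlaw : ∀ a b c : A, circ a (b * c) = circ a b * (σ a)⁻¹ * circ a c) :
    Function.Bijective σ ↔
      ∃ e u : A, (∀ a : A, circ a e = a) ∧ circ u 1 = e ∧ circ 1 u = e := by
  have hσ : ∀ a, σ a = circ a 1 := by
    intro a
    have h := hlaw a 1 1
    rw [mul_one] at h
    have h2 : (1 : A) = (σ a)⁻¹ * circ a 1 := by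
      have := mul_left_cancel (a := circ a 1) (b := 1)
        (c := (σ a)⁻¹ * circ a 1) (by rw [mul_one, ← mul_assoc]; exact h)
      exact this
    calc σ a = σ a * 1 := (mul_one _).symm
      _ = σ a * ((σ a)⁻¹ * circ a 1) := by rw [← h2]
      _ = circ a 1 := mul_inv_cancel_left _ _
  constructor
  · rintro ⟨hinj, hsurj⟩
    obtain ⟨e, he⟩ := hsurj 1
    have he' : circ e 1 = 1 := by rw [← hσ]; exact he
    have hre : ∀ a, circ a e = a := by
      intro a
      apply hinj
      rw [hσ (circ a e), hσ a, hassoc, he']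
    obtain ⟨u, hu⟩ := hsurj e
    have hu' : circ u 1 = e := by rw [← hσ]; exact hu
    refine ⟨e, u, hre, hu', ?_⟩
    apply hinj
    rw [hσ (circ 1 u), hσ e, hassoc, hu', hre, he']
  · rintro ⟨e, u, hre, hu1, h1u⟩
    rw [Function.bijective_iff_has_inverse]
    refine ⟨fun b => circ b u, ?_, ?_⟩
    · intro a
      simp only [hσ, hassoc, h1u, hre]
    · intro b
      rw [hσ, hassoc, hu1, hre]
end

section
/- Let (A,⋄,∘,σ) be a skew left truss such that (A,∘) is a group with identity 1∘. Define a•b := σ⁻¹(a)∘b = a∘(1⋄)^{-∘}∘b, where (1⋄)^{-∘} is the inverse of 1⋄ in (A,∘). Then (A,⋄,•) is a skew left brace: (A,•) is a group and a•(b⋄c) = (a•b) ⋄ a⁻¹ ⋄ (a•c) for all a,b,c ∈ A, with inverses in (A,⋄). -/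
/-- If `(A,∘)` is a group, then `a • b := a ∘ (1⋄)⁻∘ ∘ b` makes `(A,⋄,•)` a skew left
brace. -/
theorem skew_truss_gives_skew_brace {A : Type*} [Group A] (circ : A → A → A) (σ : A → A)
    (hassoc : ∀ a b c : A, circ (circ a b) c = circ a (circ b c))
    (hlaw : ∀ a b c : A, circ a (b * c) = circ a b * (σ a)⁻¹ * circ a c)
    (oneC : A) (invC : A → A)
    (honeC : ∀ a : A, circ oneC a = a ∧ circ a oneC = a)
    (hinvC : ∀ a : A, circ a (invC a) = oneC ∧ circ (invC a) a = oneC) :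
    -- the operation `•`
    (∀ a b c : A,
      circ (circ (circ (circ a (invC 1)) b) (invC 1)) c
        = circ (circ a (invC 1)) (circ (circ b (invC 1)) c)) ∧
    -- `(A,•)` has an identity
    (∃ e : A, (∀ a : A, circ (circ e (invC 1)) a = a ∧ circ (circ a (invC 1)) e = a) ∧
    -- and inverses
      (∀ a : A, ∃ b : A, circ (circ a (invC 1)) b = e ∧ circ (circ b (invC 1)) a = e)) ∧
    -- the brace distributive law
    (∀ a b c : A,
      circ (circ a (invC 1)) (b * c)
        = circ (circ a (invC 1)) b * a⁻¹ * circ (circ a (invC 1)) c) := by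
  have h1i : circ 1 (invC 1) = oneC := (hinvC 1).1
  have hi1 : circ (invC 1) 1 = oneC := (hinvC 1).2
  -- σ x = circ x 1
  have hσ : ∀ x : A, σ x = circ x 1 := by
    intro x
    have h := hlaw x 1 1
    rw [mul_one] at h
    have h2 : circ x 1 * 1 = circ x 1 * ((σ x)⁻¹ * circ x 1) := by
      rw [mul_one, ← mul_assoc]; exact h
    have h3 := mul_left_cancel h2
    rw [eq_inv_mul_iff_mul_eq, mul_one] at h3
    exact h3
  -- invC (invC 1) = 1
  have hii : invC (invC 1) = 1 := by
    have h : (1 : A) = circ 1 (circ (invC 1) (invC (invC 1))) := by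
      rw [(hinvC (invC 1)).1, (honeC 1).2]
    rw [← hassoc, h1i, (honeC _).1] at h
    exact h.symm
  refine ⟨?_, ⟨1, ?_, ?_⟩, ?_⟩
  · intro a b c
    simp only [hassoc]
  · intro a
    constructor
    · rw [h1i, (honeC a).1]
    · rw [hassoc, hi1, (honeC a).2]
  · intro a
    refine ⟨circ (invC (circ a (invC 1))) 1, ?_, ?_⟩
    · rw [← hassoc, (hinvC _).1, (honeC _).1]
    · have hb : circ (circ (invC (circ a (invC 1))) 1) (invC 1) = invC (circ a (invC 1)) := by
        rw [hassoc, h1i, (honeC _).2]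
      rw [hb]
      have ha : a = circ (circ a (invC 1)) (invC (invC 1)) := by
        rw [hassoc, (hinvC (invC 1)).1, (honeC a).2]
      calc circ (invC (circ a (invC 1))) a
          = circ (invC (circ a (invC 1))) (circ (circ a (invC 1)) (invC (invC 1))) := by
            rw [← ha]
        _ = 1 := by rw [← hassoc, (hinvC _).2, (honeC _).1, hii]
  · intro a b c
    have key : circ (circ a (invC 1)) 1 = a := by rw [hassoc, hi1, (honeC a).2]
    rw [hlaw, hσ, key]
end

section
/- Let (A,+,∘,σ) be a two-sided truss: (A,+) is an abelian group, (A,∘) is a semigroup, and a∘(b+c) = a∘b + a∘c − σ(a) and (a+b)∘c = a∘c + b∘c − σ(c) hold for all a,b,c. Define a•b := a∘b − σ(a+b). Then (A,+,•) is a (not necessarily unital) ring: • is associative and distributes over + on both sides. -/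
/-- From a two-sided truss `(A,+,∘,σ)` one obtains a (nonunital) ring via
`a • b = a∘b − σ(a+b)`. -/
theorem two_sided_truss_gives_ring {A : Type*} [AddCommGroup A]
    (circ : A → A → A) (σ : A → A)
    (hassoc : ∀ a b c : A, circ (circ a b) c = circ a (circ b c))
    (hlawL : ∀ a b c : A, circ a (b + c) = circ a b + circ a c - σ a)
    (hlawR : ∀ a b c : A, circ (a + b) c = circ a c + circ b c - σ c) :
    -- associativity of •
    (∀ a b c : A,
      circ (circ a b - σ (a + b)) c - σ ((circ a b - σ (a + b)) + c)
        = circ a (circ b c - σ (b + c)) - σ (a + (circ b c - σ (b + c)))) ∧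
    -- left distributivity
    (∀ a b c : A,
      circ a (b + c) - σ (a + (b + c))
        = (circ a b - σ (a + b)) + (circ a c - σ (a + c))) ∧
    -- right distributivity
    (∀ a b c : A,
      circ (a + b) c - σ ((a + b) + c)
        = (circ a c - σ (a + c)) + (circ b c - σ (b + c))) := by
  -- σ a = a ∘ 0
  have hL0 : ∀ a, circ a 0 = σ a := by
    intro a
    have h : circ a 0 = circ a 0 + circ a 0 - σ a := by simpa using hlawL a 0 0
    rw [eq_sub_iff_add_eq] at h
    exact (add_left_cancel h).symm
  -- σ a = 0 ∘ a
  have hR0 : ∀ a, circ 0 a = σ a := by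
    intro a
    have h : circ 0 a = circ 0 a + circ 0 a - σ a := by simpa using hlawR 0 0 a
    rw [eq_sub_iff_add_eq] at h
    exact (add_left_cancel h).symm
  -- σ is "affine"
  have hσadd : ∀ a b, σ (a + b) = σ a + σ b - σ 0 := by
    intro a b
    rw [← hL0, hlawR, hL0, hL0]
  have hσneg : ∀ a, σ (-a) = σ 0 + σ 0 - σ a := by
    intro a
    have h := hσadd a (-a)
    simp only [add_neg_cancel, eq_sub_iff_add_eq] at h
    rw [eq_sub_iff_add_eq, add_comm]
    exact h.symm
  -- circ with negation
  have hLneg : ∀ a b, circ a (-b) = σ a + σ a - circ a b := by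
    intro a b
    have h := hlawL a b (-b)
    simp only [add_neg_cancel, hL0, eq_sub_iff_add_eq] at h
    rw [eq_sub_iff_add_eq, add_comm]
    exact h.symm
  have hRneg : ∀ a b, circ (-a) b = σ b + σ b - circ a b := by
    intro a b
    have h := hlawR a (-a) b
    simp only [add_neg_cancel, hR0, eq_sub_iff_add_eq] at h
    rw [eq_sub_iff_add_eq, add_comm]
    exact h.symm
  -- key: σ commutes past circ
  have hkeyL : ∀ a b, circ a (σ b) = σ (circ a b) := by
    intro a b
    rw [← hL0 b, ← hassoc, hL0]
  have hkeyR : ∀ a b, circ (σ a) b = σ (circ a b) := by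
    intro a b
    rw [← hR0 a, hassoc, hR0]
  refine ⟨?_, ?_, ?_⟩ <;> intro a b c <;>
    simp only [sub_eq_add_neg, hσadd, hσneg, hlawL, hlawR, hLneg, hRneg, hkeyL, hkeyR, hL0, hR0,
      hassoc, neg_add_rev, neg_neg, neg_sub] <;> abel
end
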